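/- arXiv:1610.08873 — 6 statements merged into one kernel-verified Lean document; each statement's English description precedes it below -/
import Mathlib

section
/- Let d be a left-invariant distance on the Heisenberg group ℍ which is 1-homogeneous with respect to dilations (d(δ_r x, δ_r y) = r·d(x,y)) and continuous with respect to the Euclidean topology. Then there exists a constant c ≥ 1 such that c⁻¹([x⁻¹y]ʰ + [x⁻¹y]ᵛ) ≤ d(x,y) ≤ c([x⁻¹y]ʰ + [x⁻¹y]ᵛ) for all x, y ∈ ℍ. -/
open Set

abbrev Heis := ℝ × ℝ × ℝ

/-- Heisenberg group product. -/
def hmul (x y : Heis) : Heis :=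
  (x.1 + y.1, x.2.1 + y.2.1, x.2.2 + y.2.2 + (x.1 * y.2.1 - x.2.1 * y.1))

/-- Heisenberg group inverse. -/
def hinv (x : Heis) : Heis := (-x.1, -x.2.1, -x.2.2)

/-- Intrinsic dilation. -/
def hdil (r : ℝ) (x : Heis) : Heis := (r * x.1, r * x.2.1, r ^ 2 * x.2.2)

/-- Horizontal components. -/
def hor (x : Heis) : ℝ × ℝ := (x.1, x.2.1)

/-- Horizontal gauge. -/
noncomputable def gaugeH (x : Heis) : ℝ := Real.sqrt (x.1 ^ 2 + x.2.1 ^ 2)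

/-- Vertical gauge. -/
noncomputable def gaugeV (x : Heis) : ℝ := Real.sqrt |x.2.2|

noncomputable def NN (x : Heis) : ℝ := gaugeH x + gaugeV x

lemma gaugeH_nonneg (x : Heis) : 0 ≤ gaugeH x := Real.sqrt_nonneg _
lemma gaugeV_nonneg (x : Heis) : 0 ≤ gaugeV x := Real.sqrt_nonneg _
lemma NN_nonneg (x : Heis) : 0 ≤ NN x := add_nonneg (gaugeH_nonneg x) (gaugeV_nonneg x)

lemma hmul_hinv (x : Heis) : hmul (hinv x) x = ((0:ℝ),(0:ℝ),(0:ℝ)) := by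
  simp [hmul, hinv]; ring

lemma hdil_hdil (a b : ℝ) (z : Heis) : hdil a (hdil b z) = hdil (a*b) z := by
  simp [hdil]; constructor
  · ring
  · constructor
    · ring
    · ring

lemma hdil_one (z : Heis) : hdil 1 z = z := by simp [hdil]

lemma hdil_zero (r : ℝ) : hdil r ((0:ℝ),(0:ℝ),(0:ℝ)) = ((0:ℝ),(0:ℝ),(0:ℝ)) := by
  simp [hdil]

lemma gaugeH_hdil (r : ℝ) (hr : 0 ≤ r) (z : Heis) : gaugeH (hdil r z) = r * gaugeH z := by
  unfold gaugeH hdil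
  rw [show (r * z.1)^2 + (r * z.2.1)^2 = r^2 * (z.1^2 + z.2.1^2) by ring,
    Real.sqrt_mul (sq_nonneg r), Real.sqrt_sq hr]

lemma gaugeV_hdil (r : ℝ) (hr : 0 ≤ r) (z : Heis) : gaugeV (hdil r z) = r * gaugeV z := by
  unfold gaugeV hdil
  rw [abs_mul, abs_of_nonneg (sq_nonneg r), Real.sqrt_mul (sq_nonneg r), Real.sqrt_sq hr]

lemma NN_hdil (r : ℝ) (hr : 0 ≤ r) (z : Heis) : NN (hdil r z) = r * NN z := by
  unfold NN; rw [gaugeH_hdil r hr, gaugeV_hdil r hr]; ring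

lemma NN_eq_zero (z : Heis) : NN z = 0 ↔ z = ((0:ℝ),(0:ℝ),(0:ℝ)) := by
  constructor
  · intro h
    have h1 : gaugeH z = 0 := by
      unfold NN at h; linarith [gaugeH_nonneg z, gaugeV_nonneg z]
    have h2 : gaugeV z = 0 := by unfold NN at h; linarith [gaugeH_nonneg z]
    unfold gaugeH at h1
    unfold gaugeV at h2
    have hs : z.1^2 + z.2.1^2 = 0 := by
      have := Real.sqrt_eq_zero (by positivity) |>.mp h1
      exact this
    have ha : z.1 = 0 := by nlinarith [sq_nonneg z.1, sq_nonneg z.2.1]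
    have hb : z.2.1 = 0 := by nlinarith [sq_nonneg z.1, sq_nonneg z.2.1]
    have hc : z.2.2 = 0 := by
      have := Real.sqrt_eq_zero (abs_nonneg _) |>.mp h2
      exact abs_eq_zero.mp this
    exact Prod.ext ha (Prod.ext hb hc)
  · rintro rfl; simp [NN, gaugeH, gaugeV]

lemma continuous_NN : Continuous NN := by
  unfold NN gaugeH gaugeV
  fun_prop

lemma abs_fst_le_gaugeH (z : Heis) : |z.1| ≤ gaugeH z := by
  rw [← Real.sqrt_sq_eq_abs]
  exact Real.sqrt_le_sqrt (by nlinarith [sq_nonneg z.2.1])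

lemma abs_snd_le_gaugeH (z : Heis) : |z.2.1| ≤ gaugeH z := by
  rw [← Real.sqrt_sq_eq_abs]
  exact Real.sqrt_le_sqrt (by nlinarith [sq_nonneg z.1])

/-- Any left-invariant, dilation-homogeneous, continuous distance on the
Heisenberg group is comparable with the sum of the horizontal and vertical
gauges. -/
theorem heisenberg_distance_gauge_equivalence
    (d : Heis → Heis → ℝ)
    (hsymm : ∀ x y, d x y = d y x)
    (htriangle : ∀ x y z, d x z ≤ d x y + d y z)
    (heq : ∀ x y, d x y = 0 ↔ x = y)
    (hcont : Continuous fun p : Heis × Heis => d p.1 p.2)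
    (hleft : ∀ z x y, d (hmul z x) (hmul z y) = d x y)
    (hhom : ∀ r : ℝ, 0 ≤ r → ∀ x y, d (hdil r x) (hdil r y) = r * d x y) :
    ∃ c : ℝ, 1 ≤ c ∧ ∀ x y : Heis,
      c⁻¹ * (gaugeH (hmul (hinv x) y) + gaugeV (hmul (hinv x) y)) ≤ d x y ∧
      d x y ≤ c * (gaugeH (hmul (hinv x) y) + gaugeV (hmul (hinv x) y)) := by
  set o : Heis := ((0:ℝ),(0:ℝ),(0:ℝ)) with ho
  set e : Heis → ℝ := fun z => d o z with he
  have econt : Continuous e := hcont.comp (continuous_const.prodMk continuous_id)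
  have hd0 : ∀ x y, d x y = e (hmul (hinv x) y) := by
    intro x y
    have := hleft (hinv x) x y
    rw [← this, hmul_hinv]
  -- the sphere
  set S : Set Heis := {z | NN z = 1} with hS
  have hSclosed : IsClosed S := isClosed_eq continuous_NN continuous_const
  have hSbdd : Bornology.IsBounded S := by
    apply Metric.isBounded_closedBall (x := o) (r := 1) |>.subset
    intro z hz
    have hz1 : NN z = 1 := hz
    have hH : gaugeH z ≤ 1 := by
      have := gaugeV_nonneg z; unfold NN at hz1; linarith
    have hV : gaugeV z ≤ 1 := by
      have := gaugeH_nonneg z; unfold NN at hz1; linarith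
    have h1 : |z.1| ≤ 1 := le_trans (abs_fst_le_gaugeH z) hH
    have h2 : |z.2.1| ≤ 1 := le_trans (abs_snd_le_gaugeH z) hH
    have h3 : |z.2.2| ≤ 1 := by
      have : Real.sqrt |z.2.2| ≤ 1 := hV
      nlinarith [Real.sq_sqrt (abs_nonneg z.2.2), Real.sqrt_nonneg |z.2.2|]
    simp only [Metric.mem_closedBall]
    rw [Prod.dist_eq, Prod.dist_eq]
    simp only [Real.dist_eq, ho]
    simp only [sub_zero]
    exact max_le h1 (max_le h2 h3)
  have hScompact : IsCompact S := Metric.isCompact_of_isClosed_isBounded hSclosed hSbdd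
  have hSne : S.Nonempty := by
    refine ⟨((1:ℝ),(0:ℝ),(0:ℝ)), ?_⟩
    show NN _ = 1
    simp [NN, gaugeH, gaugeV]
  obtain ⟨w1, hw1S, hmin⟩ := hScompact.exists_isMinOn hSne econt.continuousOn
  obtain ⟨w2, hw2S, hmax⟩ := hScompact.exists_isMaxOn hSne econt.continuousOn
  set m := e w1 with hm'
  set M := e w2 with hM'
  have hm : 0 < m := by
    rcases lt_or_eq_of_le (by
      have : d o w1 ≥ 0 := by
        have h1 := htriangle o w1 o
        have h2 := hsymm w1 o
        have h3 := (heq o o).mpr rfl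
        linarith
      exact this) with h | h
    · exact h
    · exfalso
      have : o = w1 := (heq o w1).mp h.symm
      have : NN w1 = 1 := hw1S
      rw [← ‹o = w1›] at this
      rw [show NN o = 0 from (NN_eq_zero o).mpr rfl] at this
      norm_num at this
  -- scaling bound
  have key : ∀ z : Heis, m * NN z ≤ e z ∧ e z ≤ M * NN z := by
    intro z
    by_cases hz : z = o
    · subst hz
      have : e o = 0 := (heq o o).mpr rfl
      rw [this, (NN_eq_zero o).mpr rfl]
      simp
    · have hr : 0 < NN z := lt_of_le_of_ne (NN_nonneg z) (fun h => hz ((NN_eq_zero z).mp h.symm))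
      set r := NN z with hrdef
      set w := hdil r⁻¹ z with hw
      have hwS : w ∈ S := by
        show NN w = 1
        rw [hw, NN_hdil r⁻¹ (by positivity), ← hrdef, inv_mul_cancel₀ hr.ne']
      have hzw : z = hdil r w := by
        rw [hw, hdil_hdil, mul_inv_cancel₀ hr.ne', hdil_one]
      have hez : e z = r * e w := by
        rw [hzw]
        show d o (hdil r w) = r * d o w
        conv_lhs => rw [show o = hdil r o from (hdil_zero r).symm]
        exact hhom r hr.le o w
      constructor
      · rw [hez]
        have h : m ≤ e w := hmin hwS
        nlinarith
      · rw [hez]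
        have h : e w ≤ M := hmax hwS
        nlinarith
  refine ⟨max 1 (max M m⁻¹), le_max_left _ _, ?_⟩
  set c := max 1 (max M m⁻¹) with hc
  have hc1 : (1:ℝ) ≤ c := le_max_left _ _
  have hc0 : (0:ℝ) < c := lt_of_lt_of_le one_pos hc1
  have hcM : M ≤ c := le_trans (le_max_left _ _) (le_max_right _ _)
  have hcm : m⁻¹ ≤ c := le_trans (le_max_right _ _) (le_max_right _ _)
  have hcinv : c⁻¹ ≤ m := by
    rw [inv_le_comm₀ hc0 hm]
    exact hcm
  intro x y
  set z := hmul (hinv x) y with hz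
  have hdxy : d x y = e z := hd0 x y
  have hk := key z
  have hNz : gaugeH z + gaugeV z = NN z := rfl
  constructor
  · rw [hdxy, hNz]
    calc c⁻¹ * NN z ≤ m * NN z := by
          apply mul_le_mul_of_nonneg_right hcinv (NN_nonneg z)
      _ ≤ e z := hk.1
  · rw [hdxy, hNz]
    calc e z ≤ M * NN z := hk.2
      _ ≤ c * NN z := mul_le_mul_of_nonneg_right hcM (NN_nonneg z)
end

section
/- (Vertical intermediate-value selection) Let α ∈ (0,1], ϱ > 0, let I ⊆ ℝ be an interval containing 0 in its interior, and let γ : I → ℍ be a continuous curve with γ_0 = 0 satisfying [γ_t]ʰ ≤ ϱ|t|^{(1+α)/2} and |(γ_t)ᵛ + γ¹_t·0 − t| ≤ ϱ²|t|^{1+α} for all t ∈ I (i.e., |(γ_0⁻¹γ_t)ᵛ − t| ≤ ϱ²|t|^{1+α}). Then there exists δ₂ > 0 with [−δ₂, δ₂] ⊆ I such that for every δ ∈ (0, δ₂] there is ε₂ = ε₂(δ) > 0 with the property: for every x ∈ ℍ with d(0,x) < ε₂, there exists t = t(x) ∈ [−δ, δ] such that [γ_t⁻¹x]ᵛ ≤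 [γ_t⁻¹x]ʰ. -/
open Set

open Filter Topology

/-!
The third coordinate of `γ_t⁻¹ x` is continuous in `(t, x)`. Since `(γ_t)ᵛ = t + o(t)`, at
`x = 0` it is negative for `t = δ` and positive for `t = -δ`; these signs persist for `x` in a
Euclidean neighbourhood of `0`, which contains every `x` with `d(0, x)` small because `d`
dominates the gauges. The intermediate value theorem in `t` then makes `(γ_t⁻¹ x)ᵛ` vanish.
-/

lemma abs_fst_le_gaugeH_s11 (x : Heis) : |x.1| ≤ gaugeH x :=
  Real.abs_le_sqrt (le_add_of_nonneg_right (sq_nonneg _))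

lemma abs_snd_fst_le_gaugeH (x : Heis) : |x.2.1| ≤ gaugeH x :=
  Real.abs_le_sqrt (le_add_of_nonneg_left (sq_nonneg _))

lemma gaugeV_sq (x : Heis) : gaugeV x ^ 2 = |x.2.2| :=
  Real.sq_sqrt (abs_nonneg _)

lemma norm_le_gauge_add_sq (x : Heis) :
    ‖x‖ ≤ (gaugeH x + gaugeV x) + (gaugeH x + gaugeV x) ^ 2 := by
  have hH : 0 ≤ gaugeH x := Real.sqrt_nonneg _
  have hV : 0 ≤ gaugeV x := Real.sqrt_nonneg _
  have h1 := abs_fst_le_gaugeH_s11 x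
  have h2 := abs_snd_fst_le_gaugeH x
  have h3 := gaugeV_sq x
  simp only [Prod.norm_def, Real.norm_eq_abs, max_le_iff]
  refine ⟨?_, ?_, ?_⟩ <;> nlinarith

lemma exists_pos_forall_gauge_lt_of_eventually {P : Heis → Prop} (hP : ∀ᶠ x in 𝓝 0, P x) :
    ∃ η > 0, ∀ x, gaugeH x + gaugeV x < η → P x := by
  obtain ⟨r, hr, hball⟩ := Metric.eventually_nhds_iff_ball.mp hP
  refine ⟨min 1 (r / 2), by positivity, fun x hx => hball x (mem_ball_zero_iff.mpr ?_)⟩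
  have hN : 0 ≤ gaugeH x + gaugeV x := add_nonneg (Real.sqrt_nonneg _) (Real.sqrt_nonneg _)
  have h1 := hx.trans_le (min_le_left _ _)
  have h2 := hx.trans_le (min_le_right _ _)
  nlinarith [norm_le_gauge_add_sq x]

lemma exists_pos_forall_dist_lt_of_eventually (d : Heis → Heis → ℝ) {c : ℝ} (hc : 0 < c)
    (hd : ∀ z : Heis, c⁻¹ * (gaugeH z + gaugeV z) ≤ d ((0 : ℝ), (0 : ℝ), (0 : ℝ)) z)
    {P : Heis → Prop} (hP : ∀ᶠ x in 𝓝 0, P x) :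
    ∃ ε > 0, ∀ x, d ((0 : ℝ), (0 : ℝ), (0 : ℝ)) x < ε → P x := by
  obtain ⟨η, hη, hηP⟩ := exists_pos_forall_gauge_lt_of_eventually hP
  refine ⟨c⁻¹ * η, by positivity, fun x hx => hηP x ?_⟩
  exact (mul_lt_mul_iff_right₀ (inv_pos.mpr hc)).mp ((hd x).trans_lt hx)

lemma snd_snd_hmul_hinv (p x : Heis) :
    (hmul (hinv p) x).2.2 = x.2.2 - p.2.2 - (p.1 * x.2.1 - p.2.1 * x.1) := by
  simp only [hmul, hinv]
  ring

lemma continuous_snd_snd_hmul_hinv :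
    Continuous fun q : Heis × Heis => (hmul (hinv q.1) q.2).2.2 := by
  simp only [snd_snd_hmul_hinv]
  fun_prop

lemma tendsto_snd_snd_hmul_hinv (p : Heis) :
    Tendsto (fun x => (hmul (hinv p) x).2.2) (𝓝 0) (𝓝 (-p.2.2)) :=
  (continuous_snd_snd_hmul_hinv.comp (Continuous.prodMk_right p)).tendsto' 0 _
    (by simp [snd_snd_hmul_hinv])

lemma exists_snd_snd_hmul_hinv_eq_zero {γ : ℝ → Heis} {a b : ℝ} (hab : a ≤ b)
    (hγ : ContinuousOn γ (Icc a b)) {x : Heis}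
    (ha : 0 ≤ (hmul (hinv (γ a)) x).2.2) (hb : (hmul (hinv (γ b)) x).2.2 ≤ 0) :
    ∃ t ∈ Icc a b, (hmul (hinv (γ t)) x).2.2 = 0 :=
  intermediate_value_Icc' hab
    (continuous_snd_snd_hmul_hinv.comp_continuousOn (hγ.prodMk continuousOn_const)) ⟨hb, ha⟩

lemma gaugeV_le_gaugeH_of_snd_snd_eq_zero {z : Heis} (h : z.2.2 = 0) : gaugeV z ≤ gaugeH z := by
  simp only [gaugeV, h, abs_zero, Real.sqrt_zero]
  exact Real.sqrt_nonneg _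

lemma eventually_abs_sub_le_half_abs {f : ℝ → ℝ} {α C : ℝ} (hα : 0 < α)
    (hf : ∀ᶠ t in 𝓝 0, |f t - t| ≤ C * |t| ^ (1 + α)) :
    ∀ᶠ t in 𝓝 0, |f t - t| ≤ |t| / 2 := by
  have hlim : Tendsto (fun t : ℝ => C * |t| ^ α) (𝓝 0) (𝓝 0) := by
    have h : Continuous fun t : ℝ => C * |t| ^ α := by fun_prop (disch := positivity)
    simpa [Real.zero_rpow hα.ne'] using h.tendsto 0
  filter_upwards [hf, hlim.eventually_le_const (by norm_num : (0 : ℝ) < 1 / 2)] with t hft hCt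
  rw [Real.rpow_one_add' (abs_nonneg t) (by linarith)] at hft
  nlinarith [abs_nonneg t]

theorem vertical_intermediate_value_general (α : ℝ) (hα : α ∈ Set.Ioc (0 : ℝ) 1)
    (ϱ : ℝ) (I : Set ℝ)
    (h0 : (0 : ℝ) ∈ interior I)
    (γ : ℝ → Heis) (hγ : ContinuousOn γ I)
    (hvert : ∀ t ∈ I, |(γ t).2.2 - t| ≤ ϱ ^ 2 * |t| ^ (1 + α))
    (d : Heis → Heis → ℝ) (c : ℝ) (hc : 1 ≤ c)
    (hd : ∀ z : Heis,
      c⁻¹ * (gaugeH z + gaugeV z) ≤ d ((0 : ℝ), (0 : ℝ), (0 : ℝ)) z ∧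
      d ((0 : ℝ), (0 : ℝ), (0 : ℝ)) z ≤ c * (gaugeH z + gaugeV z)) :
    ∃ δ₂ > (0 : ℝ), Set.Icc (-δ₂) δ₂ ⊆ I ∧
      ∀ δ ∈ Set.Ioc (0 : ℝ) δ₂, ∃ ε₂ > (0 : ℝ), ∀ x : Heis,
        d ((0 : ℝ), (0 : ℝ), (0 : ℝ)) x < ε₂ →
        ∃ t ∈ Set.Icc (-δ) δ,
          gaugeV (hmul (hinv (γ t)) x) ≤ gaugeH (hmul (hinv (γ t)) x) := by
  have hI : ∀ᶠ t in 𝓝 0, t ∈ I := mem_interior_iff_mem_nhds.mp h0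
  obtain ⟨r, hr, hnear⟩ := Metric.eventually_nhds_iff_ball.mp
    (hI.and (eventually_abs_sub_le_half_abs hα.1 (hI.mono hvert)))
  have hball : ∀ δ ≤ r / 2, Icc (-δ) δ ⊆ Metric.ball 0 r := fun δ hδ t ht => by
    rw [mem_ball_zero_iff, Real.norm_eq_abs, abs_lt]
    constructor <;> linarith [ht.1, ht.2]
  refine ⟨r / 2, by positivity, fun t ht => (hnear t (hball _ le_rfl ht)).1, ?_⟩
  rintro δ ⟨hδ, hδr⟩
  have hsub : Icc (-δ) δ ⊆ I := fun t ht => (hnear t (hball δ hδr ht)).1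
  have hplus := abs_le.mp (hnear δ (hball δ hδr ⟨by linarith, le_rfl⟩)).2
  have hminus := abs_le.mp (hnear (-δ) (hball δ hδr ⟨le_rfl, by linarith⟩)).2
  rw [abs_of_pos hδ] at hplus
  rw [abs_neg, abs_of_pos hδ] at hminus
  have hsigns : ∀ᶠ x in 𝓝 0,
      (hmul (hinv (γ δ)) x).2.2 < 0 ∧ 0 < (hmul (hinv (γ (-δ))) x).2.2 :=
    ((tendsto_snd_snd_hmul_hinv _).eventually_lt_const (by linarith)).and
      ((tendsto_snd_snd_hmul_hinv _).eventually_const_lt (by linarith))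
  obtain ⟨ε, hε, hεsigns⟩ :=
    exists_pos_forall_dist_lt_of_eventually d (by linarith) (fun z => (hd z).1) hsigns
  refine ⟨ε, hε, fun x hx => ?_⟩
  obtain ⟨t, ht, hzero⟩ := exists_snd_snd_hmul_hinv_eq_zero (by linarith) (hγ.mono hsub)
    (hεsigns x hx).2.le (hεsigns x hx).1.le
  exact ⟨t, ht, gaugeV_le_gaugeH_of_snd_snd_eq_zero hzero⟩

/-- Vertical intermediate-value selection: for a continuous curve γ through 0
with horizontal increments of order |t|^{(1+α)/2} and vertical increments
close to t, every point x sufficiently close to 0 admits a time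
t ∈ [-δ,δ] at which [γ_t⁻¹x]ᵛ ≤ [γ_t⁻¹x]ʰ. -/
theorem vertical_intermediate_value (α : ℝ) (hα : α ∈ Set.Ioc (0 : ℝ) 1)
    (ϱ : ℝ) (hϱ : 0 < ϱ) (I : Set ℝ) (hI : I.OrdConnected)
    (h0 : (0 : ℝ) ∈ interior I)
    (γ : ℝ → Heis) (hγ : ContinuousOn γ I)
    (hγ0 : γ 0 = ((0 : ℝ), (0 : ℝ), (0 : ℝ)))
    (hhor : ∀ t ∈ I, gaugeH (γ t) ≤ ϱ * |t| ^ ((1 + α) / 2))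
    (hvert : ∀ t ∈ I, |(γ t).2.2 - t| ≤ ϱ ^ 2 * |t| ^ (1 + α))
    (d : Heis → Heis → ℝ) (c : ℝ) (hc : 1 ≤ c)
    (hd : ∀ z : Heis,
      c⁻¹ * (gaugeH z + gaugeV z) ≤ d ((0 : ℝ), (0 : ℝ), (0 : ℝ)) z ∧
      d ((0 : ℝ), (0 : ℝ), (0 : ℝ)) z ≤ c * (gaugeH z + gaugeV z)) :
    ∃ δ₂ > (0 : ℝ), Set.Icc (-δ₂) δ₂ ⊆ I ∧
      ∀ δ ∈ Set.Ioc (0 : ℝ) δ₂, ∃ ε₂ > (0 : ℝ), ∀ x : Heis,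
        d ((0 : ℝ), (0 : ℝ), (0 : ℝ)) x < ε₂ →
        ∃ t ∈ Set.Icc (-δ) δ,
          gaugeV (hmul (hinv (γ t)) x) ≤ gaugeH (hmul (hinv (γ t)) x) :=
  vertical_intermediate_value_general α hα ϱ I h0 γ hγ hvert d c hc hd
end

section
/- (Local modulus of continuity of LSDE solutions) Let p ∈ ℍ be nondegenerate for F ∈ C¹'ᵅₕ(ℍ,ℝ²) and let γ : I → ℍ solve the LSDE: (γ_s⁻¹γ_t)ʰ = −∇ₕF(p)⁻¹(R(p,γ_t) − R(p,γ_s)) and (γ_s⁻¹γ_t)ᵛ = t−s+E_{st} with ‖E‖ := sup_{s≠t}|E_{st}|/|t−s|^{1+α} < ∞. Then there exists ε > 0 such that if γ_t ∈ B(p,ε) for all t ∈ I, then limsup_{|t−s|→0} [γ_s⁻¹γ_t]ʰ/|t−s|^{(1+α)/2} < ∞ and limsup_{|t−s|→0} d(γ_s,γ_t)/|t−s|^{1/2} < ∞. -/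
open Set

lemma rpow_mono_exp {u a b : ℝ} (hu0 : 0 ≤ u) (hu1 : u ≤ 1) (ha : 0 < a)
    (hab : a ≤ b) : u ^ b ≤ u ^ a := by
  rcases hu0.eq_or_lt with h | h
  · rw [← h, Real.zero_rpow (by linarith : b ≠ 0), Real.zero_rpow ha.ne']
  · exact Real.rpow_le_rpow_of_exponent_ge h hu1 hab

lemma gaugeH_le_norm_hor (z : Heis) : gaugeH z ≤ Real.sqrt 2 * ‖hor z‖ := by
  have hm : ‖hor z‖ = max |z.1| |z.2.1| := by
    simp [hor, Prod.norm_def, Real.norm_eq_abs]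
  have hm0 : (0:ℝ) ≤ max |z.1| |z.2.1| := le_max_of_le_left (abs_nonneg _)
  rw [gaugeH, hm]
  have h1 : z.1 ^ 2 + z.2.1 ^ 2 ≤ 2 * (max |z.1| |z.2.1|) ^ 2 := by
    have h2 := le_max_left |z.1| |z.2.1|
    have h3 := le_max_right |z.1| |z.2.1|
    nlinarith [abs_nonneg z.1, abs_nonneg z.2.1, sq_abs z.1, sq_abs z.2.1]
  calc Real.sqrt (z.1 ^ 2 + z.2.1 ^ 2) ≤ Real.sqrt (2 * (max |z.1| |z.2.1|) ^ 2) :=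
        Real.sqrt_le_sqrt h1
    _ = Real.sqrt 2 * max |z.1| |z.2.1| := by
        rw [Real.sqrt_mul (by norm_num), Real.sqrt_sq hm0]

/-- Local modulus of continuity of LSDE solutions: a solution γ of the LSDE at
a nondegenerate point p has horizontal increments of order |t-s|^{(1+α)/2} and
is 1/2-Hölder with respect to d, as |t-s| → 0, provided γ stays in a
sufficiently small ball around p. -/
theorem lsde_modulus_of_continuity (α : ℝ) (hα : α ∈ Set.Ioc (0 : ℝ) 1)
    (d : Heis → Heis → ℝ) (F : Heis → ℝ × ℝ) (p : Heis)
    (A Ainv : (ℝ × ℝ) →L[ℝ] ℝ × ℝ)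
    (hAinv : A.comp Ainv = ContinuousLinearMap.id ℝ (ℝ × ℝ) ∧
      Ainv.comp A = ContinuousLinearMap.id ℝ (ℝ × ℝ))
    (R : Heis → ℝ × ℝ)
    (hR : ∀ x : Heis, R x = F x - F p - A (hor x - hor p))
    (K : ℝ) (hK : 0 ≤ K)
    (htaylor : ∀ r ∈ Set.Ioc (0 : ℝ) 1, ∀ x y : Heis,
      d p x < r → d p y < r →
      ‖R y - R x‖ ≤ K * (r ^ α * gaugeH (hmul (hinv x) y) +
        gaugeV (hmul (hinv x) y) ^ (1 + α)))
    (c : ℝ) (hc : 1 ≤ c)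
    (hd : ∀ x y : Heis,
      c⁻¹ * (gaugeH (hmul (hinv x) y) + gaugeV (hmul (hinv x) y)) ≤ d x y ∧
      d x y ≤ c * (gaugeH (hmul (hinv x) y) + gaugeV (hmul (hinv x) y)))
    (I : Set ℝ) (hI : I.OrdConnected) (γ : ℝ → Heis) (hγ : ContinuousOn γ I)
    (hhor : ∀ s ∈ I, ∀ t ∈ I,
      hor (hmul (hinv (γ s)) (γ t)) = -(Ainv (R (γ t) - R (γ s))))
    (E : ℝ → ℝ → ℝ) (NE : ℝ) (hNE : 0 ≤ NE)
    (hvert : ∀ s ∈ I, ∀ t ∈ I,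
      (hmul (hinv (γ s)) (γ t)).2.2 = t - s + E s t)
    (hE : ∀ s ∈ I, ∀ t ∈ I, |E s t| ≤ NE * |t - s| ^ (1 + α)) :
    ∃ ε > (0 : ℝ), (∀ t ∈ I, d p (γ t) < ε) →
      (∃ M : ℝ, ∃ η > (0 : ℝ), ∀ s ∈ I, ∀ t ∈ I, |t - s| ≤ η →
        gaugeH (hmul (hinv (γ s)) (γ t)) ≤ M * |t - s| ^ ((1 + α) / 2)) ∧
      (∃ M : ℝ, ∃ η > (0 : ℝ), ∀ s ∈ I, ∀ t ∈ I, |t - s| ≤ η →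
        d (γ s) (γ t) ≤ M * |t - s| ^ ((1 : ℝ) / 2)) := by
  obtain ⟨hα0, hα1⟩ := hα
  set C : ℝ := Real.sqrt 2 * ‖Ainv‖ with hCdef
  have hC0 : 0 ≤ C := mul_nonneg (Real.sqrt_nonneg 2) (norm_nonneg _)
  set D : ℝ := C * K with hDdef
  have hD0 : 0 ≤ D := mul_nonneg hC0 hK
  have h2D : (0:ℝ) < 2 * D + 1 := by linarith
  set ε : ℝ := min 1 ((2 * D + 1)⁻¹ ^ (α⁻¹)) with hεdef
  have hε0 : 0 < ε :=
    lt_min one_pos (Real.rpow_pos_of_pos (by positivity) _)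
  have hε1 : ε ≤ 1 := min_le_left _ _
  have hεα : D * ε ^ α ≤ 1 / 2 := by
    have h1 : ε ^ α ≤ ((2 * D + 1)⁻¹ ^ (α⁻¹)) ^ α :=
      Real.rpow_le_rpow hε0.le (min_le_right _ _) hα0.le
    have h2 : ((2 * D + 1)⁻¹ ^ (α⁻¹)) ^ α = (2 * D + 1)⁻¹ := by
      rw [← Real.rpow_mul (by positivity), inv_mul_cancel₀ hα0.ne', Real.rpow_one]
    have h3 : D * (2 * D + 1)⁻¹ ≤ 1 / 2 := by
      rw [← div_eq_mul_inv, div_le_iff₀ h2D]; linarith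
    calc D * ε ^ α ≤ D * (2 * D + 1)⁻¹ := by
          rw [← h2]; exact mul_le_mul_of_nonneg_left h1 hD0
      _ ≤ 1 / 2 := h3
  refine ⟨ε, hε0, fun hball => ?_⟩
  set B : ℝ := Real.sqrt (1 + NE) with hBdef
  have hB0 : 0 ≤ B := Real.sqrt_nonneg _
  set M₁ : ℝ := 2 * D * B ^ (1 + α) with hM₁def
  have hBpow0 : 0 ≤ B ^ (1 + α) := Real.rpow_nonneg hB0 _
  have hM₁0 : 0 ≤ M₁ := by positivity
  -- the key pointwise estimates
  have key : ∀ s ∈ I, ∀ t ∈ I, |t - s| ≤ 1 →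
      gaugeH (hmul (hinv (γ s)) (γ t)) ≤ M₁ * |t - s| ^ ((1 + α) / 2) ∧
      gaugeV (hmul (hinv (γ s)) (γ t)) ≤ B * |t - s| ^ ((1:ℝ) / 2) := by
    intro s hs t ht hu1
    set z : Heis := hmul (hinv (γ s)) (γ t) with hzdef
    set u : ℝ := |t - s| with hudef
    have hu0 : 0 ≤ u := abs_nonneg _
    have hgH0 : 0 ≤ gaugeH z := Real.sqrt_nonneg _
    have hgV0 : 0 ≤ gaugeV z := Real.sqrt_nonneg _
    -- vertical estimate
    have hvb : gaugeV z ≤ B * u ^ ((1:ℝ) / 2) := by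
      have h1 : |z.2.2| ≤ (1 + NE) * u := by
        rw [hvert s hs t ht]
        have h2 : |t - s + E s t| ≤ |t - s| + |E s t| := abs_add_le _ _
        have h3 := hE s hs t ht
        have h4 : u ^ (1 + α) ≤ u := by
          have := rpow_mono_exp hu0 hu1 one_pos (by linarith : (1:ℝ) ≤ 1 + α)
          rwa [Real.rpow_one] at this
        nlinarith
      calc gaugeV z = Real.sqrt |z.2.2| := rfl
        _ ≤ Real.sqrt ((1 + NE) * u) := Real.sqrt_le_sqrt h1
        _ = B * Real.sqrt u := Real.sqrt_mul (by linarith) _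
        _ = B * u ^ ((1:ℝ) / 2) := by rw [Real.sqrt_eq_rpow]
    -- vertical gauge power estimate
    have hvpow : gaugeV z ^ (1 + α) ≤ B ^ (1 + α) * u ^ ((1 + α) / 2) := by
      have h1 : gaugeV z ^ (1 + α) ≤ (B * u ^ ((1:ℝ) / 2)) ^ (1 + α) :=
        Real.rpow_le_rpow hgV0 hvb (by linarith)
      have h2 : (B * u ^ ((1:ℝ) / 2)) ^ (1 + α)
          = B ^ (1 + α) * u ^ ((1 + α) / 2) := by
        rw [Real.mul_rpow hB0 (Real.rpow_nonneg hu0 _),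
          ← Real.rpow_mul hu0]
        ring_nf
      rw [h2] at h1; exact h1
    -- horizontal estimate
    have hhb : gaugeH z ≤ 2 * D * gaugeV z ^ (1 + α) := by
      have h1 : gaugeH z ≤ C * ‖R (γ t) - R (γ s)‖ := by
        have h2 := gaugeH_le_norm_hor z
        rw [hzdef, hhor s hs t ht] at h2
        rw [norm_neg] at h2
        calc gaugeH z ≤ Real.sqrt 2 * ‖Ainv (R (γ t) - R (γ s))‖ := h2
          _ ≤ Real.sqrt 2 * (‖Ainv‖ * ‖R (γ t) - R (γ s)‖) :=
            mul_le_mul_of_nonneg_left (Ainv.le_opNorm _) (Real.sqrt_nonneg 2)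
          _ = C * ‖R (γ t) - R (γ s)‖ := by rw [hCdef]; ring
      have h3 := htaylor ε ⟨hε0, hε1⟩ (γ s) (γ t) (hball s hs) (hball t ht)
      have h4 : gaugeH z ≤ C * (K * (ε ^ α * gaugeH z + gaugeV z ^ (1 + α))) :=
        h1.trans (mul_le_mul_of_nonneg_left h3 hC0)
      have h5 : C * (K * (ε ^ α * gaugeH z + gaugeV z ^ (1 + α)))
          = (D * ε ^ α) * gaugeH z + D * gaugeV z ^ (1 + α) := by
        rw [hDdef]; ring
      rw [h5] at h4
      have h6 : (D * ε ^ α) * gaugeH z ≤ (1 / 2) * gaugeH z :=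
        mul_le_mul_of_nonneg_right hεα hgH0
      have h7 : 0 ≤ gaugeV z ^ (1 + α) := Real.rpow_nonneg hgV0 _
      nlinarith
    constructor
    · calc gaugeH z ≤ 2 * D * gaugeV z ^ (1 + α) := hhb
        _ ≤ 2 * D * (B ^ (1 + α) * u ^ ((1 + α) / 2)) :=
          mul_le_mul_of_nonneg_left hvpow (by linarith)
        _ = M₁ * u ^ ((1 + α) / 2) := by rw [hM₁def]; ring
    · exact hvb
  constructor
  · exact ⟨M₁, 1, one_pos, fun s hs t ht hu => (key s hs t ht hu).1⟩
  · refine ⟨c * (M₁ + B), 1, one_pos, fun s hs t ht hu => ?_⟩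
    obtain ⟨hH, hV⟩ := key s hs t ht hu
    set u : ℝ := |t - s| with hudef
    have hu0 : 0 ≤ u := abs_nonneg _
    have hle : u ^ ((1 + α) / 2) ≤ u ^ ((1:ℝ) / 2) :=
      rpow_mono_exp hu0 hu (by norm_num) (by linarith)
    have hd2 := (hd (γ s) (γ t)).2
    have hpow0 : 0 ≤ u ^ ((1:ℝ) / 2) := Real.rpow_nonneg hu0 _
    calc d (γ s) (γ t)
        ≤ c * (gaugeH (hmul (hinv (γ s)) (γ t)) + gaugeV (hmul (hinv (γ s)) (γ t))) := hd2
      _ ≤ c * (M₁ * u ^ ((1 + α) / 2) + B * u ^ ((1:ℝ) / 2)) := by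
          have := mul_le_mul_of_nonneg_left (add_le_add hH hV) (by linarith : (0:ℝ) ≤ c)
          exact this
      _ ≤ c * (M₁ * u ^ ((1:ℝ) / 2) + B * u ^ ((1:ℝ) / 2)) := by
          have : M₁ * u ^ ((1 + α) / 2) ≤ M₁ * u ^ ((1:ℝ) / 2) :=
            mul_le_mul_of_nonneg_left hle hM₁0
          nlinarith
      _ = c * (M₁ + B) * u ^ ((1:ℝ) / 2) := by ring
end

section
/- (Quantitative injectivity from a lower bound on speed) Let γ : I → ℍ be a curve satisfying |(γ_s⁻¹γ_t)ᵛ − ∫_s^t ϑ(τ)dτ| ≤ |t−s|·ω(|t−s|) for all s,t ∈ I, where ϑ : I → ℝ is continuous on a compact interval I, ω : [0,∞) → [0,∞) is non-decreasing with ω(0⁺) = 0, and the distance d on ℍ satisfies |(x⁻¹y)ᵛ| ≤ c·d(x,y)² for some constant c. Let s₀ ∈ I with ϑ(s₀) ≥ m > 0. Then there exist δ > 0 and C > 0 (depending on m, the modulus of continuity of ϑ, and ω) such that |t−s₀| ≤ C·d(γ_{s₀}, γ_t)² for all t ∈ I with |t−s₀| ≤ δ. -/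
open Set

/-- Quantitative injectivity from a lower bound on speed: if the vertical
increments of γ are controlled by ∫ϑ up to |t-s|ω(|t-s|), ϑ is continuous with
ϑ(s₀) ≥ m > 0, and |(x⁻¹y)ᵛ| ≤ c d(x,y)², then |t-s₀| ≤ C d(γ_{s₀},γ_t)² for
t close to s₀. -/
theorem quantitative_injectivity (a b : ℝ) (hab : a ≤ b)
    (γ : ℝ → Heis) (ϑ : ℝ → ℝ) (hϑ : ContinuousOn ϑ (Set.Icc a b))
    (ω : ℝ → ℝ) (hω_nonneg : ∀ u, 0 ≤ u → 0 ≤ ω u)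
    (hω_mono : MonotoneOn ω (Set.Ici (0 : ℝ)))
    (hω0 : Filter.Tendsto ω (nhdsWithin 0 (Set.Ioi 0)) (nhds 0))
    (hvert : ∀ s ∈ Set.Icc a b, ∀ t ∈ Set.Icc a b,
      |(hmul (hinv (γ s)) (γ t)).2.2 - ∫ τ in s..t, ϑ τ| ≤ |t - s| * ω |t - s|)
    (d : Heis → Heis → ℝ) (c : ℝ) (hc : 0 < c)
    (hd : ∀ x y : Heis, |(hmul (hinv x) y).2.2| ≤ c * d x y ^ 2)
    (s₀ : ℝ) (hs₀ : s₀ ∈ Set.Icc a b) (m : ℝ) (hm : 0 < m) (hϑs₀ : m ≤ ϑ s₀) :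
    ∃ δ > (0 : ℝ), ∃ C > (0 : ℝ), ∀ t ∈ Set.Icc a b,
      |t - s₀| ≤ δ → |t - s₀| ≤ C * d (γ s₀) (γ t) ^ 2 := by

  -- Step 1: lower bound ϑ ≥ m/2 near s₀ within [a,b]
  have hcont : ContinuousWithinAt ϑ (Set.Icc a b) s₀ := hϑ s₀ hs₀
  have hev : ∀ᶠ τ in nhdsWithin s₀ (Set.Icc a b), m / 2 < ϑ τ := by
    have : Set.Ioi (m / 2) ∈ nhds (ϑ s₀) := Ioi_mem_nhds (by linarith)
    exact hcont this
  rw [eventually_nhdsWithin_iff, Metric.eventually_nhds_iff] at hev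
  obtain ⟨η, hη, hθlb⟩ := hev
  -- Step 2: ω small near 0
  have hω' : ∀ᶠ u in nhdsWithin 0 (Set.Ioi (0:ℝ)), ω u < m / 4 := by
    have : Set.Iio (m / 4) ∈ nhds (0:ℝ) := Iio_mem_nhds (by linarith)
    exact hω0 this
  rw [eventually_nhdsWithin_iff, Metric.eventually_nhds_iff] at hω'
  obtain ⟨δ₁, hδ₁, hωsmall⟩ := hω'
  refine ⟨min (η / 2) (δ₁ / 2), by positivity, 4 * c / m, by positivity, ?_⟩
  intro t ht htδ
  rcases eq_or_ne t s₀ with rfl | hts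
  · simp only [sub_self, abs_zero]
    positivity
  have h0 : 0 < |t - s₀| := abs_pos.mpr (sub_ne_zero.mpr hts)
  have hωlt : ω |t - s₀| < m / 4 := by
    refine hωsmall (y := |t - s₀|) ?_ (Set.mem_Ioi.mpr h0)
    rw [Real.dist_eq, sub_zero, abs_abs]
    calc |t - s₀| ≤ min (η / 2) (δ₁ / 2) := htδ
      _ ≤ δ₁ / 2 := min_le_right _ _
      _ < δ₁ := by linarith
  -- integrability
  have hsub : Set.uIcc s₀ t ⊆ Set.Icc a b := Set.uIcc_subset_Icc hs₀ ht
  have hint : IntervalIntegrable ϑ MeasureTheory.volume s₀ t :=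
    (hϑ.mono hsub).intervalIntegrable
  -- pointwise lower bound on the interval
  have hptw : ∀ τ ∈ Set.uIcc s₀ t, m / 2 ≤ ϑ τ := by
    intro τ hτ
    refine le_of_lt (hθlb (y := τ) ?_ (hsub hτ))
    rw [Real.dist_eq]
    have h1 : |τ - s₀| ≤ |t - s₀| := by
      rcases le_total s₀ t with h | h
      · rw [Set.uIcc_of_le h] at hτ
        rw [abs_of_nonneg (by linarith [hτ.1]), abs_of_nonneg (by linarith)]
        linarith [hτ.2]
      · rw [Set.uIcc_of_ge h] at hτ
        rw [abs_of_nonpos (by linarith [hτ.2]), abs_of_nonpos (by linarith)]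
        linarith [hτ.1]
    calc |τ - s₀| ≤ |t - s₀| := h1
      _ ≤ min (η / 2) (δ₁ / 2) := htδ
      _ < η := lt_of_le_of_lt (min_le_left _ _) (by linarith)
  -- lower bound on the integral
  have hI : m / 2 * |t - s₀| ≤ |∫ τ in s₀..t, ϑ τ| := by
    rcases le_total s₀ t with h | h
    · have := intervalIntegral.integral_mono_on h
        (intervalIntegrable_const (c := m / 2)) hint
        (fun τ hτ => hptw τ (by rwa [Set.uIcc_of_le h]))
      rw [intervalIntegral.integral_const, smul_eq_mul] at this
      rw [abs_of_nonneg (by linarith)]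
      calc m / 2 * (t - s₀) = (t - s₀) * (m / 2) := by ring
        _ ≤ ∫ τ in s₀..t, ϑ τ := this
        _ ≤ |∫ τ in s₀..t, ϑ τ| := le_abs_self _
    · have hint' : IntervalIntegrable ϑ MeasureTheory.volume t s₀ := hint.symm
      have := intervalIntegral.integral_mono_on h
        (intervalIntegrable_const (c := m / 2)) hint'
        (fun τ hτ => hptw τ (by rwa [Set.uIcc_of_ge h]))
      rw [intervalIntegral.integral_const, smul_eq_mul] at this
      rw [intervalIntegral.integral_symm, abs_neg, abs_of_nonpos (by linarith)]
      calc m / 2 * -(t - s₀) = (s₀ - t) * (m / 2) := by ring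
        _ ≤ ∫ τ in t..s₀, ϑ τ := this
        _ ≤ |∫ τ in t..s₀, ϑ τ| := le_abs_self _
  -- combine
  have hv := hvert s₀ hs₀ t ht
  have hlow : m / 4 * |t - s₀| ≤ |(hmul (hinv (γ s₀)) (γ t)).2.2| := by
    have h1 : |∫ τ in s₀..t, ϑ τ| - |(hmul (hinv (γ s₀)) (γ t)).2.2|
        ≤ |t - s₀| * ω |t - s₀| := by
      calc _ ≤ |(hmul (hinv (γ s₀)) (γ t)).2.2 - ∫ τ in s₀..t, ϑ τ| := by
              rw [abs_sub_comm]; exact abs_sub_abs_le_abs_sub _ _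
        _ ≤ _ := hv
    nlinarith [h0]
  have hdd := hd (γ s₀) (γ t)
  have hsq : (0:ℝ) ≤ d (γ s₀) (γ t) ^ 2 := sq_nonneg _
  have : m / 4 * |t - s₀| ≤ c * d (γ s₀) (γ t) ^ 2 := le_trans hlow hdd
  rw [div_mul_eq_mul_div, le_div_iff₀ hm]
  nlinarith
end

section
/- (Upper bound for spherical Hausdorff measure of a vertical curve) Let I be a compact interval and γ : I → ℍ a curve with [γ_s⁻¹γ_t]ʰ ≤ √(|t−s|ω(|t−s|)) and |(γ_s⁻¹γ_t)ᵛ − ∫_s^t ϑ(τ)dτ| ≤ |t−s|ω(|t−s|) for all s,t ∈ I, where ϑ : I → ℝ is continuous and ω is non-decreasing with ω(0⁺) = 0. Then there exists a constant C > 0 (depending only on the distance d) such that the 2-dimensional spherical Hausdorff measure satisfies 𝒮²_d(γ(I)) ≤ C ∫_I |ϑ(τ)| dτ. -/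
open Set

/-- The 2-dimensional spherical Hausdorff measure (as an outer measure value)
associated to a distance d on ℍ, with normalization constant βd: infimum over
countable covers by d-balls of radii at most ε, then supremum over ε > 0. -/
noncomputable def sphHaus (d : Heis → Heis → ℝ) (βd : ℝ) (U : Set Heis) : ENNReal :=
  ⨆ ε ∈ Set.Ioi (0 : ℝ),
    sInf { m : ENNReal | ∃ (cent : ℕ → Heis) (rad : ℕ → ℝ),
      (∀ i, 0 ≤ rad i ∧ rad i ≤ ε) ∧
      U ⊆ ⋃ i, { x | d (cent i) x < rad i } ∧
      m = ∑' i, ENNReal.ofReal (βd * rad i ^ 2) }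

private lemma three_sq_aux (x y z : ℝ) : (x + y + z) ^ 2 ≤ 3 * (x ^ 2 + y ^ 2 + z ^ 2) := by
  nlinarith [sq_nonneg (x - y), sq_nonneg (x - z), sq_nonneg (y - z)]

set_option maxHeartbeats 4000000 in
/-- Upper bound for the spherical Hausdorff measure of a vertical curve:
𝒮²_d(γ(I)) ≤ C ∫_I |ϑ|, with C depending only on the distance d and the
normalization βd. -/
theorem vertical_curve_measure_upper_bound
    (d : Heis → Heis → ℝ) (βd : ℝ) (hβd : 0 < βd) (c : ℝ) (hc : 1 ≤ c)
    (hd : ∀ x y : Heis,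
      d x y ≤ c * (gaugeH (hmul (hinv x) y) + gaugeV (hmul (hinv x) y))) :
    ∃ C > (0 : ℝ), ∀ (a b : ℝ), a ≤ b →
      ∀ (γ : ℝ → Heis) (ϑ : ℝ → ℝ), ContinuousOn ϑ (Set.Icc a b) →
      ∀ ω : ℝ → ℝ, (∀ u, 0 ≤ u → 0 ≤ ω u) →
        MonotoneOn ω (Set.Ici (0 : ℝ)) →
        Filter.Tendsto ω (nhdsWithin 0 (Set.Ioi 0)) (nhds 0) →
        (∀ s ∈ Set.Icc a b, ∀ t ∈ Set.Icc a b,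
          gaugeH (hmul (hinv (γ s)) (γ t)) ≤
            Real.sqrt (|t - s| * ω |t - s|)) →
        (∀ s ∈ Set.Icc a b, ∀ t ∈ Set.Icc a b,
          |(hmul (hinv (γ s)) (γ t)).2.2 - ∫ τ in s..t, ϑ τ| ≤
            |t - s| * ω |t - s|) →
        sphHaus d βd (γ '' Set.Icc a b) ≤
          ENNReal.ofReal (C * ∫ τ in Set.Icc a b, |ϑ τ|) := by
  classical
  refine ⟨3 * c ^ 2 * βd + 1, by linarith only [mul_nonneg (sq_nonneg c) (le_of_lt hβd)], ?_⟩
  intro a b hab γ ϑ hϑc ω hωnn hωmono hωtend hH hV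
  have hc0 : (0:ℝ) < c := lt_of_lt_of_le one_pos hc
  -- ω 0 = 0
  have hω00 : ω 0 = 0 := by
    have h1 : (0:ℝ) ≤ ω 0 := hωnn 0 le_rfl
    have h2 : ω 0 ≤ 0 := by
      refine ge_of_tendsto hωtend ?_
      filter_upwards [self_mem_nhdsWithin] with u hu
      exact hωmono (Set.mem_Ici.mpr le_rfl) (Set.mem_Ici.mpr (le_of_lt hu)) (le_of_lt hu)
    linarith
  -- bound on |ϑ|
  obtain ⟨M₀, hM₀⟩ := (isCompact_Icc (a := a) (b := b)).exists_bound_of_continuousOn hϑc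
  set M := max M₀ 0 with hMdef
  have hM : ∀ τ ∈ Set.Icc a b, |ϑ τ| ≤ M := fun τ hτ =>
    le_trans (by simpa [Real.norm_eq_abs] using hM₀ τ hτ) (le_max_left _ _)
  have hM0 : (0:ℝ) ≤ M := le_max_right _ _
  clear_value M
  -- integrability
  have hIcc : ∀ s t : ℝ, s ∈ Set.Icc a b → t ∈ Set.Icc a b →
      Set.uIcc s t ⊆ Set.Icc a b := by
    intro s t hs ht
    rw [Set.uIcc]
    exact Set.Icc_subset_Icc (le_inf hs.1 ht.1) (sup_le hs.2 ht.2)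
  have hInt : ∀ s t : ℝ, s ∈ Set.Icc a b → t ∈ Set.Icc a b →
      IntervalIntegrable (fun τ => |ϑ τ|) MeasureTheory.volume s t := fun s t hs ht =>
    (hϑc.abs.mono (hIcc s t hs ht)).intervalIntegrable
  have hIϑeq : (∫ τ in Set.Icc a b, |ϑ τ|) = ∫ τ in a..b, |ϑ τ| := by
    rw [intervalIntegral.integral_of_le hab, MeasureTheory.integral_Icc_eq_integral_Ioc]
  have hIϑ0 : 0 ≤ ∫ τ in Set.Icc a b, |ϑ τ| := MeasureTheory.integral_nonneg fun τ => abs_nonneg _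
  -- reduce to one ε and one η
  rw [sphHaus]
  refine iSup₂_le fun ε hε => ?_
  rw [Set.mem_Ioi] at hε
  refine ENNReal.le_of_forall_pos_le_add fun η hη _ => ?_
  have hη' : (0:ℝ) < (η:ℝ) := hη
  -- parameters
  set L := b - a with hLdef
  have hL0 : (0:ℝ) ≤ L := by simp [hLdef]; linarith
  set K := ω L with hKdef
  have hK0 : (0:ℝ) ≤ K := hωnn L hL0
  set E := (ε / (4 * c)) ^ 2 with hEdef
  have hE0 : (0:ℝ) < E := pow_pos (div_pos hε (by linarith)) 2
  have hEs : Real.sqrt E = ε / (4 * c) := by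
    rw [hEdef]; exact Real.sqrt_sq (div_nonneg (le_of_lt hε) (by linarith))
  clear_value E
  have hden0 : (0:ℝ) < 2 * (6 * c ^ 2 * βd * L + 1) := by
    linarith only [mul_nonneg (mul_nonneg (mul_nonneg (by norm_num : (0:ℝ) ≤ 6)
      (sq_nonneg c)) (le_of_lt hβd)) hL0]
  set η₁ := (η:ℝ) / (2 * (6 * c ^ 2 * βd * L + 1)) with hη₁def
  have hη₁0 : (0:ℝ) < η₁ := div_pos hη' hden0
  have hη₁half : 6 * c ^ 2 * βd * L * η₁ ≤ (η:ℝ) / 2 := by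
    rw [hη₁def]
    rw [show 6 * c ^ 2 * βd * L * ((η:ℝ) / (2 * (6 * c ^ 2 * βd * L + 1)))
      = (6 * c ^ 2 * βd * L * (η:ℝ)) / (2 * (6 * c ^ 2 * βd * L + 1)) by ring]
    rw [div_le_div_iff₀ hden0 (by norm_num : (0:ℝ) < 2)]
    linarith only [hη']
  clear_value η₁
  obtain ⟨δ₀, hδ₀0, hδ₀⟩ : ∃ δ₀ > (0:ℝ), ∀ u, 0 < u → u ≤ δ₀ → ω u ≤ η₁ := by
    rw [Metric.tendsto_nhdsWithin_nhds] at hωtend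
    obtain ⟨δ₀, hδ₀0, h⟩ := hωtend _ hη₁0
    refine ⟨δ₀ / 2, half_pos hδ₀0, fun u hu hu' => ?_⟩
    have h2 : dist u 0 < δ₀ := by
      rw [Real.dist_eq, sub_zero, abs_of_pos hu]; linarith
    have := h (Set.mem_Ioi.mpr hu) h2
    rw [Real.dist_eq, sub_zero] at this
    exact le_of_lt (lt_of_le_of_lt (le_abs_self _) this)
  have hMK1 : (0:ℝ) < M + K + 1 := by linarith
  set δstar := min δ₀ (E / (M + K + 1)) with hδstardef
  have hδstar0 : (0:ℝ) < δstar := lt_min hδ₀0 (div_pos hE0 hMK1)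
  have hδstarδ₀ : δstar ≤ δ₀ := min_le_left _ _
  have hδstarE : δstar ≤ E / (M + K + 1) := min_le_right _ _
  clear_value δstar
  set N := ⌈L / δstar⌉₊ + 1 with hNdef
  have hN1 : 1 ≤ N := Nat.le_add_left 1 _
  have hNR : (0:ℝ) < (N:ℝ) := by exact_mod_cast hN1
  have hNceil : L / δstar ≤ (N:ℝ) := by
    refine le_trans (Nat.le_ceil _) ?_
    exact_mod_cast Nat.le_succ _
  clear_value N
  set δ := L / N with hδdef
  have hδ0 : (0:ℝ) ≤ δ := div_nonneg hL0 (le_of_lt hNR)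
  have hNδ : (N:ℝ) * δ = L := by
    rw [hδdef]; field_simp
  have hδδstar : δ ≤ δstar := by
    rw [hδdef, div_le_iff₀ hNR]
    calc L = (L / δstar) * δstar := by field_simp
      _ ≤ (N:ℝ) * δstar := mul_le_mul_of_nonneg_right hNceil (le_of_lt hδstar0)
      _ = δstar * N := by ring
  have hδL : δ ≤ L := div_le_self hL0 (by exact_mod_cast hN1)
  clear_value δ
  have hωδ0 : (0:ℝ) ≤ ω δ := hωnn δ hδ0
  have hδδ₀ : δ ≤ δ₀ := le_trans hδδstar hδstarδ₀
  have hδE : δ ≤ E / (M + K + 1) := le_trans hδδstar hδstarE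
  have hLb : a + L = b := by rw [hLdef]; ring
  have hωδη₁ : ω δ ≤ η₁ := by
    rcases eq_or_lt_of_le hδ0 with h | h
    · rw [← h, hω00]; exact le_of_lt hη₁0
    · exact hδ₀ δ h hδδ₀
  have hωδK : ω δ ≤ K := hωmono (Set.mem_Ici.mpr hδ0) (Set.mem_Ici.mpr hL0) hδL
  have h6N : (0:ℝ) < 6 * N * βd + 1 := by
    linarith only [mul_nonneg (mul_nonneg (by norm_num : (0:ℝ) ≤ 6) (le_of_lt hNR)) (le_of_lt hβd)]
  set κ := min (ε / 2) (Real.sqrt ((η:ℝ) / (6 * N * βd + 1))) with hκdef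
  have hκ0 : (0:ℝ) < κ := lt_min (half_pos hε) (Real.sqrt_pos.mpr (div_pos hη' h6N))
  have hκε : κ ≤ ε / 2 := min_le_left _ _
  have hκη : 3 * (N:ℝ) * βd * κ ^ 2 ≤ (η:ℝ) / 2 := by
    have h1 : κ ^ 2 ≤ (η:ℝ) / (6 * N * βd + 1) := by
      have h2 : κ ≤ Real.sqrt ((η:ℝ) / (6 * N * βd + 1)) := min_le_right _ _
      exact (Real.le_sqrt (le_of_lt hκ0) (le_of_lt (div_pos hη' h6N))).mp h2
    rw [le_div_iff₀ h6N] at h1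
    linarith only [h1, sq_nonneg κ]
  clear_value κ
  -- partition points
  set ti : ℕ → ℝ := fun i => a + i * δ with htidef
  have hti_mem : ∀ i, i ≤ N → ti i ∈ Set.Icc a b := by
    intro i hi
    have hiR : (i:ℝ) ≤ (N:ℝ) := by exact_mod_cast hi
    constructor
    · simp only [htidef]
      linarith only [mul_nonneg (Nat.cast_nonneg (α := ℝ) i) hδ0]
    · simp only [htidef]
      linarith only [mul_le_mul_of_nonneg_right hiR hδ0, hNδ, hLb]
  have hti_succ : ∀ i : ℕ, ti (i + 1) = ti i + δ := by
    intro i; simp only [htidef, Nat.cast_add, Nat.cast_one]; ring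
  set V : ℕ → ℝ := fun i => ∫ τ in (ti i)..(ti (i+1)), |ϑ τ| with hVdef
  have hV0 : ∀ i, i < N → 0 ≤ V i := by
    intro i hi
    refine intervalIntegral.integral_nonneg ?_ (fun τ _ => abs_nonneg _)
    rw [hti_succ]; linarith
  have hVM : ∀ i, i < N → V i ≤ M * δ := by
    intro i hi
    have hsub : Set.uIcc (ti i) (ti (i+1)) ⊆ Set.Icc a b :=
      hIcc _ _ (hti_mem i (le_of_lt hi)) (hti_mem (i+1) hi)
    have h := intervalIntegral.norm_integral_le_of_norm_le_const
      (C := M) (f := fun τ => |ϑ τ|) (a := ti i) (b := ti (i+1)) ?_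
    · have habs : |ti (i+1) - ti i| = δ := by
        rw [hti_succ]; simp [abs_of_nonneg hδ0]
      rw [habs, Real.norm_eq_abs] at h
      calc V i ≤ |V i| := le_abs_self _
        _ ≤ M * δ := h
    · intro x hx
      have hx' : x ∈ Set.Icc a b := hsub (Set.uIoc_subset_uIcc hx)
      simpa [Real.norm_eq_abs, abs_abs] using hM x hx'
  have hVsum : ∑ i ∈ Finset.range N, V i = ∫ τ in a..b, |ϑ τ| := by
    have h := intervalIntegral.sum_integral_adjacent_intervals
      (f := fun τ => |ϑ τ|) (μ := MeasureTheory.volume) (a := ti) (n := N)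
      (fun k hk => hInt _ _ (hti_mem k (le_of_lt hk)) (hti_mem (k+1) hk))
    have h0 : ti 0 = a := by simp [htidef]
    have hN' : ti N = b := by
      simp only [htidef]
      rw [hNδ, hLb]
    rw [h0, hN'] at h
    exact h
  -- cover
  set rad : ℕ → ℝ := fun i => if i < N then
      c * (Real.sqrt (δ * ω δ) + Real.sqrt (V i + δ * ω δ)) + κ else 0 with hraddef
  set cent : ℕ → Heis := fun i => γ (ti i) with hcentdef
  have hrad_bound : ∀ i, 0 ≤ rad i ∧ rad i ≤ ε := by
    intro i
    by_cases hi : i < N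
    · constructor
      · simp only [hraddef, if_pos hi]
        have h1 := Real.sqrt_nonneg (δ * ω δ)
        have h2 := Real.sqrt_nonneg (V i + δ * ω δ)
        have h3 := mul_nonneg (le_of_lt hc0) (add_nonneg h1 h2)
        linarith only [h3, hκ0]
      · have h1 : δ * ω δ ≤ δ * (M + K) :=
          mul_le_mul_of_nonneg_left (by linarith only [hωδK, hM0]) hδ0
        have h2 : V i + δ * ω δ ≤ δ * (M + K) := by
          linarith only [hVM i hi, mul_le_mul_of_nonneg_left hωδK hδ0]
        have h3 : δ * (M + K) ≤ E := by
          have h5 := mul_le_mul_of_nonneg_right hδE (le_of_lt hMK1)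
          rw [div_mul_cancel₀ _ (ne_of_gt hMK1)] at h5
          linarith only [h5, hδ0]
        have h4 : Real.sqrt (δ * ω δ) ≤ ε / (4 * c) := by
          rw [← hEs]; exact Real.sqrt_le_sqrt (le_trans h1 h3)
        have h5 : Real.sqrt (V i + δ * ω δ) ≤ ε / (4 * c) := by
          rw [← hEs]; exact Real.sqrt_le_sqrt (le_trans h2 h3)
        have h6 : c * (ε / (4 * c) + ε / (4 * c)) = ε / 2 := by
          field_simp; ring
        simp only [hraddef, if_pos hi]
        calc c * (Real.sqrt (δ * ω δ) + Real.sqrt (V i + δ * ω δ)) + κ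
            ≤ c * (ε / (4 * c) + ε / (4 * c)) + κ := by
              linarith only [mul_le_mul_of_nonneg_left (add_le_add h4 h5) (le_of_lt hc0)]
          _ = ε / 2 + κ := by rw [h6]
          _ ≤ ε := by linarith
    · simp only [hraddef, if_neg hi]
      exact ⟨le_rfl, le_of_lt hε⟩
  have hcover : (γ '' Set.Icc a b) ⊆ ⋃ i, { x | d (cent i) x < rad i } := by
    rintro x ⟨t, ht, rfl⟩
    set i := min ⌊(t - a) / δ⌋₊ (N - 1) with hidef
    have hiN : i < N := lt_of_le_of_lt (min_le_right _ _) (by omega)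
    have hta : 0 ≤ t - a := by linarith [ht.1]
    have hbound : ti i ≤ t ∧ t ≤ ti i + δ := by
      rcases eq_or_lt_of_le hδ0 with h0 | h0
    -- δ = 0 case
      · have hLz : L = 0 := by rw [← hNδ, ← h0]; ring
        have htb : t = a := by
          have hba : b = a := by rw [← hLb, hLz]; ring
          exact le_antisymm (hba ▸ ht.2) ht.1
        constructor
        · simp only [htidef, ← h0, htb]; simp
        · simp only [htidef, ← h0, htb]; simp
      · constructor
        · have h1 : (i:ℝ) ≤ (t - a) / δ := by
            have h2 : (i:ℝ) ≤ (⌊(t - a) / δ⌋₊ : ℝ) := by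
              exact_mod_cast min_le_left ⌊(t - a) / δ⌋₊ (N - 1)
            exact le_trans h2 (Nat.floor_le (by positivity))
          have h3 : (i:ℝ) * δ ≤ t - a := by
            rw [← div_mul_cancel₀ (t - a) (ne_of_gt h0)]
            exact mul_le_mul_of_nonneg_right h1 hδ0
          simp only [htidef]; linarith
        · rcases le_or_gt ⌊(t - a) / δ⌋₊ (N - 1) with hc1 | hc1
          · have hieq : i = ⌊(t - a) / δ⌋₊ := min_eq_left hc1
            have h1 : (t - a) / δ < (i:ℝ) + 1 := by
              rw [hieq]; exact_mod_cast Nat.lt_floor_add_one ((t - a) / δ)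
            have h2 : t - a < ((i:ℝ) + 1) * δ := by
              rw [← div_mul_cancel₀ (t - a) (ne_of_gt h0)]
              exact mul_lt_mul_of_pos_right h1 h0
            simp only [htidef]; linarith only [h2]
          · have hieq : i = N - 1 := min_eq_right (le_of_lt hc1)
            have h1 : (i:ℝ) + 1 = (N:ℝ) := by
              rw [hieq]
              have : N - 1 + 1 = N := by omega
              exact_mod_cast congrArg (Nat.cast : ℕ → ℝ) this
            have h2 : ti i + δ = b := by
              simp only [htidef]
              have : (i:ℝ) * δ + δ = (N:ℝ) * δ := by rw [← h1]; ring
              rw [add_assoc, this, hNδ, hLb]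
            rw [h2]; exact ht.2
      -- distance estimate
    refine Set.mem_iUnion.mpr ⟨i, ?_⟩
    have hs : ti i ∈ Set.Icc a b := hti_mem i (le_of_lt hiN)
    have hts : |t - ti i| = t - ti i := abs_of_nonneg (by linarith [hbound.1])
    have htsδ : t - ti i ≤ δ := by linarith [hbound.2]
    have hts0 : 0 ≤ t - ti i := by linarith [hbound.1]
    have hωts : ω (t - ti i) ≤ ω δ :=
      hωmono (Set.mem_Ici.mpr hts0) (Set.mem_Ici.mpr hδ0) htsδ
    have hωts0 : 0 ≤ ω (t - ti i) := hωnn _ hts0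
    have hgH : gaugeH (hmul (hinv (γ (ti i))) (γ t)) ≤ Real.sqrt (δ * ω δ) := by
      refine le_trans (hH (ti i) hs t ht) (Real.sqrt_le_sqrt ?_)
      rw [hts]
      exact mul_le_mul htsδ hωts hωts0 hδ0
    have hgV : gaugeV (hmul (hinv (γ (ti i))) (γ t)) ≤ Real.sqrt (V i + δ * ω δ) := by
      have h1 : |(hmul (hinv (γ (ti i))) (γ t)).2.2 - ∫ τ in (ti i)..t, ϑ τ|
          ≤ (t - ti i) * ω (t - ti i) := by
        have := hV (ti i) hs t ht; rwa [hts] at this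
      have h2 : |∫ τ in (ti i)..t, ϑ τ| ≤ ∫ τ in (ti i)..t, |ϑ τ| :=
        intervalIntegral.abs_integral_le_integral_abs (by linarith [hbound.1])
      have h3 : (∫ τ in (ti i)..t, |ϑ τ|) ≤ V i := by
        rw [hVdef]
        refine intervalIntegral.integral_mono_interval le_rfl (by linarith [hbound.1])
          (by rw [hti_succ]; linarith [hbound.2]) ?_
          (hInt _ _ (hti_mem i (le_of_lt hiN)) (hti_mem (i+1) hiN))
        exact MeasureTheory.ae_of_all _ fun τ => abs_nonneg _
      have h4 : |(hmul (hinv (γ (ti i))) (γ t)).2.2| ≤ V i + δ * ω δ := by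
        have h5 : (t - ti i) * ω (t - ti i) ≤ δ * ω δ :=
          mul_le_mul htsδ hωts hωts0 hδ0
        calc |(hmul (hinv (γ (ti i))) (γ t)).2.2|
            ≤ |∫ τ in (ti i)..t, ϑ τ| + (t - ti i) * ω (t - ti i) := by
              have := abs_sub_abs_le_abs_sub ((hmul (hinv (γ (ti i))) (γ t)).2.2)
                (∫ τ in (ti i)..t, ϑ τ)
              linarith
          _ ≤ V i + δ * ω δ := by linarith
      rw [gaugeV]
      exact Real.sqrt_le_sqrt h4
    show d (cent i) (γ t) < rad i
    have hd' := hd (γ (ti i)) (γ t)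
    have hcent : cent i = γ (ti i) := rfl
    rw [hcent]
    calc d (γ (ti i)) (γ t)
        ≤ c * (gaugeH (hmul (hinv (γ (ti i))) (γ t)) + gaugeV (hmul (hinv (γ (ti i))) (γ t))) :=
          hd'
      _ ≤ c * (Real.sqrt (δ * ω δ) + Real.sqrt (V i + δ * ω δ)) := by
          linarith only [mul_le_mul_of_nonneg_left (add_le_add hgH hgV) (le_of_lt hc0)]
      _ < rad i := by simp only [hraddef, if_pos hiN]; linarith
  -- conclude
  refine le_trans (sInf_le ⟨cent, rad, hrad_bound, hcover, rfl⟩) ?_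
  have htsum : (∑' i, ENNReal.ofReal (βd * rad i ^ 2))
      = ∑ i ∈ Finset.range N, ENNReal.ofReal (βd * rad i ^ 2) := by
    refine tsum_eq_sum ?_
    intro i hi
    have hi' : ¬ i < N := by simpa using hi
    simp [hraddef, hi']
  rw [htsum, ← ENNReal.ofReal_sum_of_nonneg (fun i _ => mul_nonneg (le_of_lt hβd) (sq_nonneg _))]
  have hsum_le : (∑ i ∈ Finset.range N, βd * rad i ^ 2)
      ≤ (3 * c ^ 2 * βd + 1) * (∫ τ in Set.Icc a b, |ϑ τ|) + (η:ℝ) := by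
    set P := βd * (6 * c ^ 2 * (δ * ω δ) + 3 * κ ^ 2) with hPdef
    have hterm : ∀ i ∈ Finset.range N, βd * rad i ^ 2 ≤ P + 3 * c ^ 2 * βd * V i := by
      intro i hi
      have hi' : i < N := Finset.mem_range.mp hi
      simp only [hraddef, if_pos hi', hPdef]
      have hsq1 := Real.sq_sqrt (show (0:ℝ) ≤ δ * ω δ by positivity)
      have hsq2 := Real.sq_sqrt (show (0:ℝ) ≤ V i + δ * ω δ by
        linarith only [hV0 i hi', mul_nonneg hδ0 hωδ0])
      have key2 : (c * (Real.sqrt (δ * ω δ) + Real.sqrt (V i + δ * ω δ)) + κ) ^ 2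
          ≤ 3 * (c ^ 2 * (δ * ω δ) + c ^ 2 * (V i + δ * ω δ) + κ ^ 2) := by
        have key := three_sq_aux (c * Real.sqrt (δ * ω δ))
          (c * Real.sqrt (V i + δ * ω δ)) κ
        have e1 : (c * Real.sqrt (δ * ω δ)) ^ 2 = c ^ 2 * (δ * ω δ) := by
          rw [mul_pow, hsq1]
        have e2 : (c * Real.sqrt (V i + δ * ω δ)) ^ 2 = c ^ 2 * (V i + δ * ω δ) := by
          rw [mul_pow, hsq2]
        rw [show c * (Real.sqrt (δ * ω δ) + Real.sqrt (V i + δ * ω δ)) + κ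
          = c * Real.sqrt (δ * ω δ) + c * Real.sqrt (V i + δ * ω δ) + κ by ring]
        rw [← e1, ← e2]
        exact key
      have key3 := mul_le_mul_of_nonneg_left key2 (le_of_lt hβd)
      linarith only [key3]
    calc (∑ i ∈ Finset.range N, βd * rad i ^ 2)
        ≤ ∑ i ∈ Finset.range N, (P + 3 * c ^ 2 * βd * V i) := Finset.sum_le_sum hterm
      _ = (N:ℝ) * P + 3 * c ^ 2 * βd * ∑ i ∈ Finset.range N, V i := by
          rw [Finset.sum_add_distrib, Finset.sum_const, ← Finset.mul_sum]
          simp [nsmul_eq_mul]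
      _ ≤ (η:ℝ) + 3 * c ^ 2 * βd * (∫ τ in Set.Icc a b, |ϑ τ|) := by
          rw [hVsum, ← hIϑeq]
          have hNP : (N:ℝ) * P ≤ (η:ℝ) := by
            have hA : βd * (6 * c ^ 2 * ((N:ℝ) * (δ * ω δ))) = 6 * c ^ 2 * βd * L * ω δ := by
              rw [show (N:ℝ) * (δ * ω δ) = ((N:ℝ) * δ) * ω δ by ring, hNδ]; ring
            have h1 : 6 * c ^ 2 * βd * L * ω δ ≤ (η:ℝ) / 2 := by
              have h2 : 6 * c ^ 2 * βd * L * ω δ ≤ 6 * c ^ 2 * βd * L * η₁ := by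
                exact mul_le_mul_of_nonneg_left hωδη₁
                  (mul_nonneg (mul_nonneg (mul_nonneg
                    (by norm_num : (0:ℝ) ≤ 6) (sq_nonneg c)) (le_of_lt hβd)) hL0)
              exact le_trans h2 hη₁half
            have h4 : (N:ℝ) * P = 6 * c ^ 2 * βd * L * ω δ + 3 * (N:ℝ) * βd * κ ^ 2 := by
              rw [hPdef, ← hA]; ring
            rw [h4]
            calc 6 * c ^ 2 * βd * L * ω δ + 3 * (N:ℝ) * βd * κ ^ 2
                ≤ (η:ℝ) / 2 + (η:ℝ) / 2 := add_le_add h1 hκη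
              _ = (η:ℝ) := by ring
          linarith only [hNP]
      _ ≤ (3 * c ^ 2 * βd + 1) * (∫ τ in Set.Icc a b, |ϑ τ|) + (η:ℝ) := by linarith only [hIϑ0]
  calc ENNReal.ofReal (∑ i ∈ Finset.range N, βd * rad i ^ 2)
      ≤ ENNReal.ofReal ((3 * c ^ 2 * βd + 1) * (∫ τ in Set.Icc a b, |ϑ τ|) + (η:ℝ)) :=
        ENNReal.ofReal_le_ofReal hsum_le
    _ ≤ ENNReal.ofReal ((3 * c ^ 2 * βd + 1) * (∫ τ in Set.Icc a b, |ϑ τ|))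
          + ENNReal.ofReal (η:ℝ) := ENNReal.ofReal_add_le
    _ = ENNReal.ofReal ((3 * c ^ 2 * βd + 1) * (∫ τ in Set.Icc a b, |ϑ τ|)) + η := by
        rw [ENNReal.ofReal_coe_nnreal]
end

section
/- (Coarea formula for horizontal homomorphisms) Let L : ℍ → ℝ² be given by L(x) = M·(x¹,x²) for an invertible 2×2 real matrix M. Then for every Borel set U ⊆ ℍ, ∫_U |det M| dℒ³ = ∫_{ℝ²} 𝒮²_d(U ∩ L⁻¹(z)) dℒ²(z), where ℒ³ and ℒ² are Lebesgue measures and 𝒮²_d is the 2-dimensional spherical Hausdorff measure with respect to a homogeneous left-invariant distance d, normalized so that vertical lines {(z,t) : t ∈ ℝ} satisfy 𝒮²_d({(z,t) : t ∈ A}) = ℒ¹(A) for Borel A ⊆ ℝ. -/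
open Set

/-!
Since `e` is injective, the fibre of `x ↦ e (x.1, x.2.1)` over `e v` is the vertical line through
`v`, and the normalization of `𝒮²_d` turns its intersection with `U` into the Lebesgue measure of
the vertical slice of `U` at `v`. Integrating over `v` gives `ℒ³(U)` by Fubini, and the linear
substitution `z = e v` contributes the factor `|det e|`.
-/

open MeasureTheory

theorem measure_prod_prod_eq_lintegral_slice {α β γ : Type*} [MeasurableSpace α]
    [MeasurableSpace β] [MeasurableSpace γ] (μ : Measure α) (ν : Measure β) (ρ : Measure γ)
    [SFinite ν] [SFinite ρ] {s : Set (α × β × γ)} (hs : MeasurableSet s) :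
    μ.prod (ν.prod ρ) s = ∫⁻ v, ρ {t | (v.1, v.2, t) ∈ s} ∂μ.prod ν := by
  rw [← (measurePreserving_prodAssoc μ ν ρ).measure_preimage hs.nullMeasurableSet,
    Measure.prod_apply (MeasurableEquiv.prodAssoc.measurable hs)]
  rfl

theorem lintegral_eq_abs_det_mul_lintegral_comp {E : Type*} [NormedAddCommGroup E]
    [NormedSpace ℝ E] [FiniteDimensional ℝ E] [MeasurableSpace E] [BorelSpace E]
    (μ : Measure E) [μ.IsAddHaarMeasure] {f : E →ₗ[ℝ] E} (hf : LinearMap.det f ≠ 0)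
    (g : E → ENNReal) :
    ∫⁻ x, g x ∂μ = ENNReal.ofReal |LinearMap.det f| * ∫⁻ x, g (f x) ∂μ := by
  have hbij : Function.Bijective f := (f.equivOfDetNeZero hf).bijective
  have hderiv : ∀ x ∈ (univ : Set E),
      HasFDerivWithinAt f (LinearMap.toContinuousLinearMap f) univ x :=
    fun x _ => (LinearMap.toContinuousLinearMap f).hasFDerivAt.hasFDerivWithinAt
  have hchange := lintegral_image_eq_lintegral_abs_det_fderiv_mul μ MeasurableSet.univ hderiv
    hbij.injective.injOn g
  rw [image_univ_of_surjective hbij.surjective, Measure.restrict_univ,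
    LinearMap.det_toContinuousLinearMap] at hchange
  rw [hchange, lintegral_const_mul' _ _ ENNReal.ofReal_ne_top]

theorem inter_fiber_eq_setOf_mem_slice {α β γ : Type*} (s : Set (α × β × γ)) (v : α × β) :
    s ∩ {x | (x.1, x.2.1) = v} = {x | (x.1, x.2.1) = v ∧ x.2.2 ∈ {t | (v.1, v.2, t) ∈ s}} := by
  ext ⟨a, b, t⟩
  simp only [mem_inter_iff, mem_ofPred_eq]
  constructor
  · rintro ⟨hs, rfl⟩
    exact ⟨rfl, hs⟩
  · rintro ⟨rfl, hs⟩
    exact ⟨hs, rfl⟩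

theorem coarea_horizontal_homomorphism_general
    (d : Heis → Heis → ℝ) (βd : ℝ)
    (hnorm : ∀ (v : ℝ × ℝ) (A : Set ℝ), MeasurableSet A →
      sphHaus d βd { x : Heis | (x.1, x.2.1) = v ∧ x.2.2 ∈ A } =
        MeasureTheory.volume A)
    (e : (ℝ × ℝ) →ₗ[ℝ] ℝ × ℝ) (he : LinearMap.det e ≠ 0)
    (U : Set Heis) (hU : MeasurableSet U) :
    ENNReal.ofReal |LinearMap.det e| * MeasureTheory.volume U =
      ∫⁻ z : ℝ × ℝ, sphHaus d βd (U ∩ { x : Heis | e (x.1, x.2.1) = z }) := by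
  have he_inj : Function.Injective e := (e.equivOfDetNeZero he).injective
  have hfiber : ∀ v : ℝ × ℝ,
      sphHaus d βd (U ∩ {x : Heis | e (x.1, x.2.1) = e v}) =
        volume {t : ℝ | (v.1, v.2, t) ∈ U} := fun v => by
    simp_rw [he_inj.eq_iff, inter_fiber_eq_setOf_mem_slice]
    exact hnorm v _ (measurable_prodMk_left.comp measurable_prodMk_left hU)
  rw [lintegral_eq_abs_det_mul_lintegral_comp volume he, lintegral_congr hfiber]
  exact congrArg _ (measure_prod_prod_eq_lintegral_slice volume volume volume hU)

/-- Coarea formula for horizontal homomorphisms L(x) = M·(x¹,x²), M an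
invertible linear map of ℝ²: for every Borel U ⊆ ℍ,
∫_U |det M| dℒ³ = ∫_{ℝ²} 𝒮²_d(U ∩ L⁻¹(z)) dℒ²(z), where 𝒮²_d is normalized so
that vertical lines are parametrized by arc length. -/
theorem coarea_horizontal_homomorphism
    (d : Heis → Heis → ℝ) (βd : ℝ) (hβd : 0 < βd)
    (hnorm : ∀ (v : ℝ × ℝ) (A : Set ℝ), MeasurableSet A →
      sphHaus d βd { x : Heis | (x.1, x.2.1) = v ∧ x.2.2 ∈ A } =
        MeasureTheory.volume A)
    (e : (ℝ × ℝ) →ₗ[ℝ] ℝ × ℝ) (he : LinearMap.det e ≠ 0)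
    (U : Set Heis) (hU : MeasurableSet U) :
    ENNReal.ofReal |LinearMap.det e| * MeasureTheory.volume U =
      ∫⁻ z : ℝ × ℝ, sphHaus d βd (U ∩ { x : Heis | e (x.1, x.2.1) = z }) :=
  coarea_horizontal_homomorphism_general d βd hnorm e he U hU
end
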